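/- Let n ≥ 1 and γ ∈ ℝ, let U ⊆ ℝⁿ be open, and let v : ℝⁿ → ℝ be three times continuously differentiable, strictly positive on U, and satisfy Δv = (n/2)·|Dv|²/v on U. Then the pointwise inequality (divervgammaS2vi) holds on U: div( v^γ·S²_{ij}(D²v)·∂_i v ) + (γ/2)·div( v^{γ−1}·|Dv|²·Dv ) ≤ |Dv|⁴·v^{γ−2}·( (n(n−1))/4 − (γ/2)(1−γ) + (3γn)/4 ). -/

import Mathlib

/-- Partial derivative `∂_i f` of a function on `ℝⁿ`. -/
noncomputable def pd {n : ℕ} (i : Fin n) (f : (Fin n → ℝ) → ℝ) (x : Fin n → ℝ) : ℝ :=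
  fderiv ℝ f x (Pi.single i 1)

/-- Laplacian `Δf = ∑ᵢ ∂ᵢᵢ f`. -/
noncomputable def lap {n : ℕ} (f : (Fin n → ℝ) → ℝ) (x : Fin n → ℝ) : ℝ :=
  ∑ i, pd i (pd i f) x

/-- `S²_{ij}(D²v) = (Δv)·δ_{ij} − ∂_{ij}v`. -/
noncomputable def S2ij {n : ℕ} (v : (Fin n → ℝ) → ℝ) (i j : Fin n) (x : Fin n → ℝ) : ℝ :=
  lap v x * (if i = j then 1 else 0) - pd j (pd i v) x

/-- `|Df|² = ∑ᵢ (∂ᵢf)²`. -/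
noncomputable def gradSq {n : ℕ} (f : (Fin n → ℝ) → ℝ) (x : Fin n → ℝ) : ℝ :=
  ∑ i, (pd i f x) ^ 2

/-!
Both divergences are expanded by the product rule. Since `S²(D²v)` is divergence free for
`v ∈ C³` (a consequence of the symmetry of third derivatives), the first one equals
`γ v^{γ-1} (Δv |Dv|² - D²v(Dv,Dv)) + v^γ ((Δv)² - |D²v|²)`, and the term `D²v(Dv,Dv)`
cancels against the corresponding term of the second divergence. What is left is
`v^γ ((Δv)² - |D²v|²) + (3γ/2) v^{γ-1} |Dv|² Δv + (γ(γ-1)/2) v^{γ-2} |Dv|⁴`.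
The Newton (Cauchy–Schwarz) inequality `(Δv)² ≤ n |D²v|²` and the equation
`Δv = (n/2) |Dv|²/v` then give the bound.
-/

noncomputable def hessNormSq {n : ℕ} (f : (Fin n → ℝ) → ℝ) (x : Fin n → ℝ) : ℝ :=
  ∑ j, ∑ i, pd j (pd i f) x ^ 2

noncomputable def hessGradGrad {n : ℕ} (f : (Fin n → ℝ) → ℝ) (x : Fin n → ℝ) : ℝ :=
  ∑ j, ∑ i, pd j (pd i f) x * pd i f x * pd j f x

section PartialDerivatives

variable {n : ℕ} {f g : (Fin n → ℝ) → ℝ} {x : Fin n → ℝ} {i j : Fin n}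

lemma pd_congr (h : f =ᶠ[nhds x] g) : pd i f x = pd i g x := by
  rw [pd, pd, h.fderiv_eq]

lemma pd_mul (hf : DifferentiableAt ℝ f x) (hg : DifferentiableAt ℝ g x) :
    pd i (fun y => f y * g y) x = pd i f x * g x + f x * pd i g x := by
  rw [pd, (hf.hasFDerivAt.fun_mul hg.hasFDerivAt).fderiv]
  simp [pd]; ring

lemma pd_sub (hf : DifferentiableAt ℝ f x) (hg : DifferentiableAt ℝ g x) :
    pd i (fun y => f y - g y) x = pd i f x - pd i g x := by
  rw [pd, fderiv_fun_sub hf hg]; simp [pd]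

lemma pd_mul_const (hf : DifferentiableAt ℝ f x) (c : ℝ) :
    pd i (fun y => f y * c) x = pd i f x * c := by
  rw [pd, fderiv_mul_const hf]; simp [pd, mul_comm]

lemma pd_sum {ι : Type*} (s : Finset ι) (F : ι → (Fin n → ℝ) → ℝ)
    (hF : ∀ k ∈ s, DifferentiableAt ℝ (F k) x) :
    pd i (fun y => ∑ k ∈ s, F k y) x = ∑ k ∈ s, pd i (F k) x := by
  rw [pd, fderiv_fun_sum hF]; simp [pd]

lemma pd_rpow (γ : ℝ) (hf : DifferentiableAt ℝ f x) (hfx : f x ≠ 0) :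
    pd i (fun y => f y ^ γ) x = γ * f x ^ (γ - 1) * pd i f x := by
  rw [pd, (hf.hasFDerivAt.rpow_const (Or.inl hfx)).fderiv]
  simp [pd]

lemma pd_sq (hf : DifferentiableAt ℝ f x) :
    pd i (fun y => f y ^ 2) x = 2 * f x * pd i f x := by
  rw [pd, (hf.hasFDerivAt.pow 2).fderiv]
  simp [pd]

lemma ContDiffAt.contDiffAt_pd {m k : WithTop ℕ∞} (hf : ContDiffAt ℝ k f x)
    (hmk : m + 1 ≤ k) : ContDiffAt ℝ m (pd i f) x :=
  (hf.fderiv_right hmk).clm_apply contDiffAt_const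

lemma pd_comm (hf : ContDiffAt ℝ 2 f x) : pd j (pd i f) x = pd i (pd j f) x := by
  have hd : DifferentiableAt ℝ (fderiv ℝ f) x :=
    (hf.fderiv_right (by norm_num : (1 : WithTop ℕ∞) + 1 ≤ 2)).differentiableAt one_ne_zero
  have hpd : ∀ k l : Fin n,
      pd l (pd k f) x = fderiv ℝ (fderiv ℝ f) x (Pi.single l 1) (Pi.single k 1) := by
    intro k l
    have hk : pd k f = fun y => fderiv ℝ f y (Pi.single k 1) := rfl
    rw [pd, hk, (hd.hasFDerivAt.clm_apply (hasFDerivAt_const _ x)).fderiv]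
    simp
  rw [hpd, hpd]
  exact hf.isSymmSndFDerivAt (by simp) _ _

end PartialDerivatives

section Hessian

variable {n : ℕ} {v : (Fin n → ℝ) → ℝ} {x : Fin n → ℝ}

lemma ContDiffAt.differentiableAt_pd (hv : ContDiffAt ℝ 2 v x) (i : Fin n) :
    DifferentiableAt ℝ (pd i v) x :=
  (hv.contDiffAt_pd (by norm_num : (1 : WithTop ℕ∞) + 1 ≤ 2)).differentiableAt one_ne_zero

lemma ContDiffAt.differentiableAt_pd_pd (hv : ContDiffAt ℝ 3 v x) (i j : Fin n) :
    DifferentiableAt ℝ (pd j (pd i v)) x :=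
  (hv.contDiffAt_pd (by norm_num : (2 : WithTop ℕ∞) + 1 ≤ 3)).differentiableAt_pd j

lemma ContDiffAt.differentiableAt_lap (hv : ContDiffAt ℝ 3 v x) :
    DifferentiableAt ℝ (lap v) x :=
  DifferentiableAt.fun_sum fun i _ => hv.differentiableAt_pd_pd i i

lemma ContDiffAt.differentiableAt_S2ij (hv : ContDiffAt ℝ 3 v x) (i j : Fin n) :
    DifferentiableAt ℝ (S2ij v i j) x :=
  (hv.differentiableAt_lap.mul_const _).sub (hv.differentiableAt_pd_pd i j)

lemma sum_pd_S2ij_eq_zero (hv : ContDiffAt ℝ 3 v x) (i : Fin n) :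
    ∑ j, pd j (S2ij v i j) x = 0 := by
  have hthird : ∀ j, pd j (pd j (pd i v)) x = pd i (pd j (pd j v)) x := by
    intro j
    have hsymm : pd j (pd i v) =ᶠ[nhds x] pd i (pd j v) :=
      (hv.eventually (by simp)).mono fun y hy => pd_comm (hy.of_le (by norm_num))
    rw [pd_congr hsymm]
    exact pd_comm (hv.contDiffAt_pd (by norm_num))
  have hS : ∀ j, pd j (S2ij v i j) x
      = pd j (lap v) x * (if i = j then 1 else 0) - pd i (pd j (pd j v)) x := by
    intro j
    rw [← hthird, ← pd_mul_const hv.differentiableAt_lap,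
      ← pd_sub (hv.differentiableAt_lap.mul_const _) (hv.differentiableAt_pd_pd i j)]
    rfl
  have hlap : pd i (lap v) x = ∑ j, pd i (pd j (pd j v)) x :=
    pd_sum _ _ fun j _ => hv.differentiableAt_pd_pd j j
  simp [hS, Finset.sum_sub_distrib, hlap]

lemma sum_sum_S2ij_mul (M : Fin n → Fin n → ℝ) :
    ∑ j, ∑ i, S2ij v i j x * M i j
      = lap v x * ∑ i, M i i - ∑ j, ∑ i, pd j (pd i v) x * M i j := by
  simp [S2ij, sub_mul, Finset.sum_sub_distrib, Finset.mul_sum]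

lemma pd_gradSq (hv : ContDiffAt ℝ 2 v x) (j : Fin n) :
    pd j (gradSq v) x = 2 * ∑ i, pd i v x * pd j (pd i v) x := by
  change pd j (fun y => ∑ i, pd i v y ^ 2) x = _
  rw [pd_sum _ (fun i y => pd i v y ^ 2) fun i _ => (hv.differentiableAt_pd i).pow 2,
    Finset.mul_sum]
  exact Finset.sum_congr rfl fun i _ => by rw [pd_sq (hv.differentiableAt_pd i), mul_assoc]

lemma sum_pd_rpow_mul_gradSq_mul_pd (β : ℝ) (hv : ContDiffAt ℝ 2 v x) (hvx : v x ≠ 0) :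
    ∑ j, pd j (fun y => v y ^ β * gradSq v y * pd j v y) x
      = β * v x ^ (β - 1) * gradSq v x ^ 2
        + v x ^ β * (2 * hessGradGrad v x + gradSq v x * lap v x) := by
  have hvd : DifferentiableAt ℝ v x := hv.differentiableAt two_ne_zero
  have hpow : DifferentiableAt ℝ (fun y => v y ^ β) x := hvd.rpow_const (Or.inl hvx)
  have hgrad : DifferentiableAt ℝ (gradSq v) x :=
    DifferentiableAt.fun_sum fun i _ => (hv.differentiableAt_pd i).pow 2
  have hterm : ∀ j, pd j (fun y => v y ^ β * gradSq v y * pd j v y) x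
      = β * v x ^ (β - 1) * gradSq v x * pd j v x ^ 2
        + v x ^ β * (2 * ∑ i, pd j (pd i v) x * pd i v x * pd j v x
          + gradSq v x * pd j (pd j v) x) := by
    intro j
    rw [pd_mul (hpow.fun_mul hgrad) (hv.differentiableAt_pd j), pd_mul hpow hgrad,
      pd_rpow β hvd hvx, pd_gradSq hv]
    have hA : ∑ i, pd j (pd i v) x * pd i v x * pd j v x
        = (∑ i, pd i v x * pd j (pd i v) x) * pd j v x := by
      rw [Finset.sum_mul]
      exact Finset.sum_congr rfl fun i _ => by ring
    rw [hA]
    ring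
  simp only [hterm, Finset.sum_add_distrib, ← Finset.mul_sum]
  simp only [hessGradGrad, lap, gradSq]
  ring

lemma sum_pd_rpow_mul_sum_S2ij_mul_pd (γ : ℝ) (hv : ContDiffAt ℝ 3 v x) (hvx : v x ≠ 0) :
    ∑ j, pd j (fun y => v y ^ γ * ∑ i, S2ij v i j y * pd i v y) x
      = γ * v x ^ (γ - 1) * (lap v x * gradSq v x - hessGradGrad v x)
        + v x ^ γ * (lap v x ^ 2 - hessNormSq v x) := by
  have hv2 : ContDiffAt ℝ 2 v x := hv.of_le (by norm_num)
  have hvd : DifferentiableAt ℝ v x := hv.differentiableAt (by norm_num)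
  have hpow : DifferentiableAt ℝ (fun y => v y ^ γ) x := hvd.rpow_const (Or.inl hvx)
  have hprod : ∀ i j, DifferentiableAt ℝ (fun y => S2ij v i j y * pd i v y) x := fun i j =>
    (hv.differentiableAt_S2ij i j).fun_mul (hv2.differentiableAt_pd i)
  have hterm : ∀ j, pd j (fun y => v y ^ γ * ∑ i, S2ij v i j y * pd i v y) x
      = γ * v x ^ (γ - 1) * ∑ i, S2ij v i j x * (pd i v x * pd j v x)
        + v x ^ γ * (∑ i, pd j (S2ij v i j) x * pd i v x
          + ∑ i, S2ij v i j x * pd j (pd i v) x) := by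
    intro j
    rw [pd_mul hpow (DifferentiableAt.fun_sum fun i _ => hprod i j), pd_rpow γ hvd hvx,
      pd_sum _ _ fun i _ => hprod i j]
    simp only [pd_mul (hv.differentiableAt_S2ij _ j) (hv2.differentiableAt_pd _), Finset.mul_sum,
      ← Finset.sum_add_distrib]
    exact Finset.sum_congr rfl fun i _ => by ring
  have hdiv : ∑ j, ∑ i, pd j (S2ij v i j) x * pd i v x = 0 := by
    rw [Finset.sum_comm]
    simp [← Finset.sum_mul, sum_pd_S2ij_eq_zero hv]
  simp only [hterm, Finset.sum_add_distrib, ← Finset.mul_sum, hdiv, sum_sum_S2ij_mul]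
  simp only [hessGradGrad, hessNormSq, gradSq, lap, mul_assoc, sq, zero_add]

lemma sum_pd_rpow_S2ij_add_half_mul_sum_pd_rpow_gradSq (γ : ℝ) (hv : ContDiffAt ℝ 3 v x)
    (hvx : v x ≠ 0) :
    (∑ j, pd j (fun y => v y ^ γ * ∑ i, S2ij v i j y * pd i v y) x)
        + (γ / 2) * ∑ j, pd j (fun y => v y ^ (γ - 1) * gradSq v y * pd j v y) x
      = v x ^ γ * (lap v x ^ 2 - hessNormSq v x + 3 * γ / 2 * (gradSq v x / v x) * lap v x
          + γ * (γ - 1) / 2 * (gradSq v x / v x) ^ 2) := by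
  rw [sum_pd_rpow_mul_sum_S2ij_mul_pd γ hv hvx,
    sum_pd_rpow_mul_gradSq_mul_pd (γ - 1) (hv.of_le (by norm_num)) hvx]
  simp only [Real.rpow_sub_one hvx]
  field_simp
  ring

lemma sq_lap_le_mul_hessNormSq : lap v x ^ 2 ≤ n * hessNormSq v x :=
  calc lap v x ^ 2 ≤ n * ∑ j, pd j (pd j v) x ^ 2 := by
        simpa [lap] using sq_sum_le_card_mul_sum_sq (s := Finset.univ)
          (f := fun j => pd j (pd j v) x)
    _ ≤ n * hessNormSq v x := by
        unfold hessNormSq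
        gcongr with j
        exact Finset.single_le_sum (f := fun i => pd j (pd i v) x ^ 2)
          (fun i _ => sq_nonneg _) (Finset.mem_univ j)

end Hessian

/-- Inequality (divervgammaS2vi): if `v > 0` solves `Δv = (n/2)·|Dv|²/v` on `U`, then
`div(v^γ·S²_{ij}(D²v)·∂ᵢv) + (γ/2)·div(v^{γ−1}·|Dv|²·Dv)
  ≤ |Dv|⁴·v^{γ−2}·(n(n−1)/4 − (γ/2)(1−γ) + 3γn/4)` on `U`. -/
theorem stmt_8 (n : ℕ) (hn : 1 ≤ n) (γ : ℝ) (U : Set (Fin n → ℝ)) (hU : IsOpen U)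
    (v : (Fin n → ℝ) → ℝ) (hv : ContDiffOn ℝ 3 v U) (hpos : ∀ x ∈ U, 0 < v x)
    (hpde : ∀ x ∈ U, lap v x = ((n : ℝ) / 2) * gradSq v x / v x)
    (x : Fin n → ℝ) (hx : x ∈ U) :
    (∑ j, pd j (fun y => v y ^ γ * ∑ i, S2ij v i j y * pd i v y) x)
      + (γ / 2) * ∑ j, pd j (fun y => v y ^ (γ - 1) * gradSq v y * pd j v y) x
    ≤ (gradSq v x) ^ 2 * v x ^ (γ - 2)
        * ((n : ℝ) * ((n : ℝ) - 1) / 4 - (γ / 2) * (1 - γ) + 3 * γ * (n : ℝ) / 4) := by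
  have hvx : 0 < v x := hpos x hx
  have hlap : lap v x = n / 2 * (gradSq v x / v x) := by rw [hpde x hx]; ring
  have hhess : n / 4 * (gradSq v x / v x) ^ 2 ≤ hessNormSq v x := by
    have hnewton := sq_lap_le_mul_hessNormSq (v := v) (x := x)
    rw [hlap] at hnewton
    have hn0 : (0 : ℝ) < n := by exact_mod_cast hn
    nlinarith
  have hrhs : gradSq v x ^ 2 * v x ^ (γ - 2) = v x ^ γ * (gradSq v x / v x) ^ 2 := by
    rw [Real.rpow_sub hvx, Real.rpow_two]
    field_simp
  rw [sum_pd_rpow_S2ij_add_half_mul_sum_pd_rpow_gradSq γ (hv.contDiffAt (hU.mem_nhds hx))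
    hvx.ne', hrhs, mul_assoc (v x ^ γ)]
  refine mul_le_mul_of_nonneg_left ?_ (Real.rpow_nonneg hvx.le γ)
  rw [hlap]
  linear_combination hhess
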